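/- arXiv:1907.08804 — 4 statements merged into one kernel-verified Lean document; each statement's English description precedes it below -/
import Mathlib

section
/- Telescoped pathwise energy identity: let V : ℝ^m → ℝ be continuously differentiable, h > 0, Σ ∈ ℝ^{m×d}, and let sequences (pₙ)ₙ, (qₙ)ₙ in ℝ^m, (Ψₙ₊₁)ₙ in ℝ^m and increments (ΔWₙ)ₙ in ℝ^d satisfy, for every n ≥ 0, the drift-preserving scheme relations Ψₙ₊₁ = pₙ + ΣΔWₙ − (h/2)∫₀¹ V'(qₙ + s h Ψₙ₊₁) ds, qₙ₊₁ = qₙ + hΨₙ₊₁, pₙ₊₁ = pₙ + ΣΔWₙ − h∫₀¹ V'(qₙ + s h Ψₙ₊₁) ds. Then for every n ≥ 0, H(pₙ, qₙ) = H(p₀, q₀) + Σ_{k=0}^{n−1} ( ⟨p_k, ΣΔW_k⟩ + (1/2)|ΣΔW_k|² ). -/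
open MeasureTheory intervalIntegral
open scoped RealInnerProductSpace BigOperators

/-- Matrix-vector multiplication `Σ ΔW` for `Σ ∈ ℝ^{m×d}`, `ΔW ∈ ℝ^d`,
viewed as a map into Euclidean space. -/
noncomputable def matVec {m d : ℕ} (S : Matrix (Fin m) (Fin d) ℝ)
    (w : EuclideanSpace ℝ (Fin d)) : EuclideanSpace ℝ (Fin m) :=
  WithLp.toLp 2 (fun i => ∑ j, S i j * w j)

/-- The separable Hamiltonian `H(p,q) = ½|p|² + V(q)`. -/
noncomputable def Ham {m : ℕ} (V : EuclideanSpace ℝ (Fin m) → ℝ)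
    (p q : EuclideanSpace ℝ (Fin m)) : ℝ :=
  (1 / 2) * ‖p‖ ^ 2 + V q

section aux
variable {m : ℕ}

lemma ftc_line (V : EuclideanSpace ℝ (Fin m) → ℝ)
    (V' : EuclideanSpace ℝ (Fin m) → EuclideanSpace ℝ (Fin m))
    (hV' : ∀ x, HasGradientAt V (V' x) x) (hV'cont : Continuous V')
    (h : ℝ) (q Ψ : EuclideanSpace ℝ (Fin m)) :
    V (q + h • Ψ) - V q = h * ⟪∫ s in (0:ℝ)..1, V' (q + (s * h) • Ψ), Ψ⟫ := by
  set f : ℝ → EuclideanSpace ℝ (Fin m) := fun s => q + (s * h) • Ψ with hf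
  have hfC : Continuous f := by
    apply continuous_const.add
    exact (continuous_id.mul continuous_const).smul continuous_const
  have hderiv : ∀ s : ℝ, HasDerivAt (fun t => V (f t)) ⟪V' (f s), h • Ψ⟫ s := by
    intro s
    have h1 : HasDerivAt f (h • Ψ) s := by
      have h0 : HasDerivAt (fun t : ℝ => (t * h) • Ψ) ((1 * h) • Ψ) s :=
        ((hasDerivAt_id s).mul_const h).smul_const Ψ
      have h0' := h0.const_add q
      rw [one_mul] at h0'
      exact h0'
    have h3 := (hV' (f s)).hasFDerivAt.comp_hasDerivAt s h1
    simpa only [Function.comp_def, InnerProductSpace.toDual_apply_apply] using h3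
  have hcont : Continuous fun s : ℝ => ⟪V' (f s), h • Ψ⟫ :=
    (hV'cont.comp hfC).inner continuous_const
  have hFTC : (∫ s in (0:ℝ)..1, ⟪V' (f s), h • Ψ⟫) = V (f 1) - V (f 0) :=
    intervalIntegral.integral_eq_sub_of_hasDerivAt (fun s _ => hderiv s)
      (hcont.intervalIntegrable 0 1)
  have hInt : IntervalIntegrable (fun s => V' (f s)) volume 0 1 :=
    (hV'cont.comp hfC).intervalIntegrable 0 1
  have hpull : (∫ s in (0:ℝ)..1, ⟪V' (f s), h • Ψ⟫)
      = ⟪h • Ψ, ∫ s in (0:ℝ)..1, V' (f s)⟫ := by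
    have h4 := (innerSL ℝ (h • Ψ)).intervalIntegral_comp_comm hInt (a := 0) (b := 1)
    have h5 : (∫ s in (0:ℝ)..1, ⟪V' (f s), h • Ψ⟫)
        = ∫ s in (0:ℝ)..1, ⟪h • Ψ, V' (f s)⟫ := by
      apply intervalIntegral.integral_congr
      intro s _
      exact real_inner_comm _ _
    rw [h5]
    simpa only [innerSL_apply_apply] using h4
  have hf1 : f 1 = q + h • Ψ := by simp [hf]
  have hf0 : f 0 = q := by simp [hf]
  rw [hf1, hf0] at hFTC
  rw [← hFTC, hpull, real_inner_smul_left, real_inner_comm]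

lemma one_step (V : EuclideanSpace ℝ (Fin m) → ℝ)
    (u v w P Q P' Q' : EuclideanSpace ℝ (Fin m))
    (hu : u = P) (hP' : P' = u + v - (2:ℝ) • w)
    (hVdiff : V Q' = V Q + 2 * ⟪w, u + v - w⟫) :
    Ham V P' Q' = Ham V P Q + (⟪P, v⟫ + (1/2) * ‖v‖^2) := by
  subst hu hP'
  simp only [Ham]
  have e1 : ‖u + v - (2:ℝ) • w‖^2 = ⟪u + v - (2:ℝ) • w, u + v - (2:ℝ) • w⟫ :=
    (real_inner_self_eq_norm_sq _).symm
  have e2 : ‖u‖^2 = ⟪u, u⟫ := (real_inner_self_eq_norm_sq _).symm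
  have e3 : ‖v‖^2 = ⟪v, v⟫ := (real_inner_self_eq_norm_sq _).symm
  rw [hVdiff, e1, e2, e3]
  simp only [inner_sub_left, inner_sub_right, inner_add_left, inner_add_right,
    real_inner_smul_left, real_inner_smul_right]
  have c1 : ⟪v, u⟫ = ⟪u, v⟫ := real_inner_comm u v
  have c2 : ⟪w, u⟫ = ⟪u, w⟫ := real_inner_comm u w
  have c3 : ⟪w, v⟫ = ⟪v, w⟫ := real_inner_comm v w
  ring_nf
  linarith [c1, c2, c3]

end aux

/-- Telescoped pathwise energy identity for the drift-preserving scheme. -/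
theorem stmt1 {m d : ℕ} (V : EuclideanSpace ℝ (Fin m) → ℝ)
    (V' : EuclideanSpace ℝ (Fin m) → EuclideanSpace ℝ (Fin m))
    (hV' : ∀ x, HasGradientAt V (V' x) x) (hV'cont : Continuous V')
    (h : ℝ) (hh : 0 < h) (S : Matrix (Fin m) (Fin d) ℝ)
    (p q Ψ : ℕ → EuclideanSpace ℝ (Fin m)) (ΔW : ℕ → EuclideanSpace ℝ (Fin d))
    (hΨ : ∀ n : ℕ, Ψ (n + 1) = p n + matVec S (ΔW n)
        - (h / 2) • ∫ s in (0:ℝ)..1, V' (q n + (s * h) • Ψ (n + 1)))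
    (hq : ∀ n : ℕ, q (n + 1) = q n + h • Ψ (n + 1))
    (hp : ∀ n : ℕ, p (n + 1) = p n + matVec S (ΔW n)
        - h • ∫ s in (0:ℝ)..1, V' (q n + (s * h) • Ψ (n + 1))) :
    ∀ n : ℕ, Ham V (p n) (q n) = Ham V (p 0) (q 0)
      + ∑ k ∈ Finset.range n,
          (⟪p k, matVec S (ΔW k)⟫ + (1 / 2) * ‖matVec S (ΔW k)‖ ^ 2) := by
  intro n
  induction n with
  | zero => simp
  | succ n ih =>
    rw [Finset.sum_range_succ, ← add_assoc, ← ih]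
    set I := ∫ s in (0:ℝ)..1, V' (q n + (s * h) • Ψ (n + 1)) with hI
    have hVd : V (q (n+1)) = V (q n)
        + 2 * ⟪(h/2) • I, p n + matVec S (ΔW n) - (h/2) • I⟫ := by
      have hftc := ftc_line V V' hV' hV'cont h (q n) (Ψ (n+1))
      rw [hq n]
      have hx : p n + matVec S (ΔW n) - (h/2) • I = Ψ (n+1) := by
        rw [hΨ n, ← hI]
      rw [hx, real_inner_smul_left]
      rw [← hI] at hftc
      linarith [hftc]
    exact one_step V (p n) (matVec S (ΔW n)) ((h/2) • I) (p n) (q n) (p (n+1)) (q (n+1))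
      rfl (by rw [hp n, ← hI]; module) hVd
end

section
/- Discrete trace formula (drift preservation) for the drift-preserving scheme: let V : ℝ^m → ℝ be continuously differentiable, h > 0, Σ ∈ ℝ^{m×d}. On a probability space, let (ΔWₙ)_{n≥0} be ℝ^d-valued random vectors whose d components are independent real Gaussian random variables with mean 0 and variance h, and let (pₙ, qₙ, Ψₙ₊₁)_{n≥0} be random vectors in ℝ^m satisfying the drift-preserving scheme relations almost surely for every n. Assume that for every n, ΔWₙ is independent of ((p₀,q₀), ΔW₀, …, ΔW_{n−1}), that (pₙ, qₙ) is measurable with respect to σ((p₀,q₀), ΔW₀, …, ΔW_{n−1}), that pₙ is square integrable, and that H(p₀, q₀) is integrable. Then for every n ≥ 0, E[H(pₙ, qₙ)] = E[H(p₀, q₀)] + (1/2) Tr(ΣᵀΣ) · n h. -/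
open MeasureTheory ProbabilityTheory intervalIntegral
open scoped BigOperators

open scoped NNReal ENNReal RealInnerProductSpace
open Real Set Filter

section auxGauss

lemma gauss_sq_integral {b : ℝ} (hb : 0 < b) :
    ∫ x : ℝ, x ^ 2 * Real.exp (-b * x ^ 2) = Real.sqrt (π / b) / (2 * b) := by
  have h1 : ∫ x : ℝ, x ^ 2 * Real.exp (-b * x ^ 2)
      = 2 * ∫ x in Ioi (0:ℝ), x ^ 2 * Real.exp (-b * x ^ 2) := by
    rw [← integral_comp_abs (f := fun x => x ^ 2 * Real.exp (-b * x ^ 2))]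
    congr 1; ext x; rw [sq_abs]
  have h2 : ∫ x in Ioi (0:ℝ), x ^ 2 * Real.exp (-b * x ^ 2)
      = b ^ (-(2 + 1 : ℝ) / 2) * (1 / 2) * Real.Gamma ((2 + 1) / 2) := by
    rw [← integral_rpow_mul_exp_neg_mul_rpow two_pos (by norm_num) hb]
    refine setIntegral_congr_fun measurableSet_Ioi (fun x hx => ?_)
    rw [← Real.rpow_natCast x 2]; norm_num
  have h3 : Real.Gamma ((2 + 1) / 2) = Real.sqrt π / 2 := by
    have : ((2 + 1 : ℝ)) / 2 = 1/2 + 1 := by norm_num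
    rw [this, Real.Gamma_add_one (by norm_num), Real.Gamma_one_half_eq]
    ring
  have hb' : b ^ (-(2 + 1 : ℝ) / 2) = (Real.sqrt b * b)⁻¹ := by
    rw [show (-(2 + 1 : ℝ) / 2) = -(1/2 + 1) by norm_num, Real.rpow_neg hb.le,
      Real.rpow_add hb, Real.rpow_one, ← Real.sqrt_eq_rpow]
  have hsb : Real.sqrt b ≠ 0 := by positivity
  rw [h1, h2, h3, hb', Real.sqrt_div pi_pos.le]
  field_simp

open scoped NNReal ENNReal

section gauss
variable {v : ℝ≥0}

lemma gaussianPDFReal_zero_mean (v : ℝ≥0) (x : ℝ) :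
    gaussianPDFReal 0 v x = (Real.sqrt (2*π*v))⁻¹ * Real.exp (-(2*(v:ℝ))⁻¹ * x^2) := by
  unfold gaussianPDFReal
  congr 1
  rw [sub_zero]
  congr 1
  field_simp

lemma gaussianReal_integral_eq (hv : v ≠ 0) (g : ℝ → ℝ) :
    ∫ x, g x ∂(gaussianReal 0 v) = ∫ x, gaussianPDFReal 0 v x * g x := by
  rw [gaussianReal_of_var_ne_zero _ hv]
  have hd : (gaussianPDF 0 v)
      = fun x => ((Real.toNNReal (gaussianPDFReal 0 v x) : ℝ≥0) : ℝ≥0∞) := rfl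
  rw [hd, integral_withDensity_eq_integral_smul
    ((measurable_gaussianPDFReal 0 v).real_toNNReal) g]
  congr 1; ext x
  rw [NNReal.smul_def, Real.coe_toNNReal _ (gaussianPDFReal_nonneg _ _ _), smul_eq_mul]

lemma gaussianReal_integrable_iff (hv : v ≠ 0) (g : ℝ → ℝ) :
    Integrable g (gaussianReal 0 v) ↔
      Integrable (fun x => gaussianPDFReal 0 v x * g x) := by
  rw [gaussianReal_of_var_ne_zero _ hv]
  have hd : (gaussianPDF 0 v)
      = fun x => ((Real.toNNReal (gaussianPDFReal 0 v x) : ℝ≥0) : ℝ≥0∞) := rfl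
  rw [hd, integrable_withDensity_iff_integrable_smul
    ((measurable_gaussianPDFReal 0 v).real_toNNReal)]
  constructor <;> intro hint <;> refine hint.congr (Filter.Eventually.of_forall fun x => ?_) <;>
    simp only [NNReal.smul_def, Real.coe_toNNReal _ (gaussianPDFReal_nonneg _ _ _), smul_eq_mul]

lemma gaussianReal_integrable_id (hv : v ≠ 0) :
    Integrable (fun x : ℝ => x) (gaussianReal 0 v) := by
  rw [gaussianReal_integrable_iff hv]
  have hb : (0:ℝ) < (2*(v:ℝ))⁻¹ := by
    have hv' : (0:ℝ) < v := lt_of_le_of_ne (v.coe_nonneg) (by exact_mod_cast (Ne.symm hv))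
    positivity
  refine ((integrable_mul_exp_neg_mul_sq hb).const_mul ((Real.sqrt (2*π*v))⁻¹)).congr
    (Filter.Eventually.of_forall fun x => ?_)
  simp only [gaussianPDFReal_zero_mean]
  ring

lemma gaussianReal_integrable_sq (hv : v ≠ 0) :
    Integrable (fun x : ℝ => x ^ 2) (gaussianReal 0 v) := by
  rw [gaussianReal_integrable_iff hv]
  have hb : (0:ℝ) < (2*(v:ℝ))⁻¹ := by
    have hv' : (0:ℝ) < v := lt_of_le_of_ne (v.coe_nonneg) (by exact_mod_cast (Ne.symm hv))
    positivity
  refine ((integrable_rpow_mul_exp_neg_mul_sq hb (by norm_num : (-1:ℝ) < 2)).const_mul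
    ((Real.sqrt (2*π*v))⁻¹)).congr (Filter.Eventually.of_forall fun x => ?_)
  simp only [gaussianPDFReal_zero_mean, ← Real.rpow_natCast x 2]
  push_cast
  ring

lemma gaussianReal_mean_zero (hv : v ≠ 0) :
    ∫ x, x ∂(gaussianReal 0 v) = 0 := by
  rw [gaussianReal_integral_eq hv]
  have hb : (0:ℝ) < (2*(v:ℝ))⁻¹ := by
    have hv' : (0:ℝ) < v := lt_of_le_of_ne (v.coe_nonneg) (by exact_mod_cast (Ne.symm hv))
    positivity
  have h1 : ∫ x : ℝ, gaussianPDFReal 0 v x * x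
      = (Real.sqrt (2*π*v))⁻¹ * ∫ x : ℝ, x * Real.exp (-(2*(v:ℝ))⁻¹ * x^2) := by
    rw [← MeasureTheory.integral_const_mul]
    congr 1; ext x; rw [gaussianPDFReal_zero_mean]; ring
  have h2 : ∫ x : ℝ, x * Real.exp (-(2*(v:ℝ))⁻¹ * x^2) = 0 := by
    set b := (2*(v:ℝ))⁻¹
    have hodd := MeasureTheory.integral_neg_eq_self
      (fun x : ℝ => x * Real.exp (-b * x^2)) volume
    simp only [neg_sq, neg_mul, ← neg_mul] at hodd
    rw [show (fun x : ℝ => -x * Real.exp (-b * x ^ 2))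
      = fun x : ℝ => -(x * Real.exp (-b * x ^ 2)) by ext x; ring,
      MeasureTheory.integral_neg] at hodd
    linarith
  rw [h1, h2, mul_zero]

lemma gaussianReal_sq_moment (hv : v ≠ 0) :
    ∫ x, x ^ 2 ∂(gaussianReal 0 v) = v := by
  rw [gaussianReal_integral_eq hv]
  have hv' : (0:ℝ) < v := lt_of_le_of_ne (v.coe_nonneg) (by exact_mod_cast (Ne.symm hv))
  have hb : (0:ℝ) < (2*(v:ℝ))⁻¹ := by positivity
  set b := (2*(v:ℝ))⁻¹ with hbdef
  have h1 : ∫ x : ℝ, gaussianPDFReal 0 v x * x ^ 2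
      = (Real.sqrt (2*π*v))⁻¹ * ∫ x : ℝ, x ^ 2 * Real.exp (-b * x^2) := by
    rw [← MeasureTheory.integral_const_mul]
    congr 1; ext x
    simp only [gaussianPDFReal_zero_mean]
    ring
  rw [h1, gauss_sq_integral hb]
  have e1 : π / b = 2*π*(v:ℝ) := by
    rw [hbdef]
    field_simp
  have e2 : 2 * b = ((v:ℝ))⁻¹ := by rw [hbdef]; field_simp
  rw [e1, e2]
  have hs : Real.sqrt (2*π*(v:ℝ)) ≠ 0 := by positivity
  field_simp
end gauss

end auxGauss

section auxMisc

lemma coord_abs_le_norm {d : ℕ} (x : EuclideanSpace ℝ (Fin d)) (i : Fin d) : |x i| ≤ ‖x‖ := by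
  rw [EuclideanSpace.norm_eq, ← Real.sqrt_sq_eq_abs]
  refine Real.sqrt_le_sqrt ?_
  have : (x i)^2 = ‖x i‖^2 := by simp [Real.norm_eq_abs, sq_abs]
  rw [this]
  exact Finset.single_le_sum (f := fun j => ‖x j‖^2) (fun _ _ => sq_nonneg _)
    (Finset.mem_univ i)

lemma mulL2 {Ω : Type*} [MeasureSpace Ω] {X Y : Ω → ℝ} (hX : MemLp X 2 ℙ) (hY : MemLp Y 2 ℙ) :
    Integrable (fun ω => X ω * Y ω) ℙ := by
  refine Integrable.mono' ((hX.integrable_sq.add hY.integrable_sq).const_mul (1/2))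
    (hX.aestronglyMeasurable.mul hY.aestronglyMeasurable)
    (Filter.Eventually.of_forall fun ω => ?_)
  simp only [Pi.add_apply]
  rw [Real.norm_eq_abs, abs_mul]
  nlinarith [sq_nonneg (|X ω| - |Y ω|), abs_nonneg (X ω), abs_nonneg (Y ω), sq_abs (X ω),
    sq_abs (Y ω)]

lemma norm_sq_eq_sum {d : ℕ} (x : EuclideanSpace ℝ (Fin d)) : ‖x‖^2 = ∑ i, (x i)^2 := by
  rw [EuclideanSpace.norm_eq, Real.sq_sqrt (by positivity)]
  simp [Real.norm_eq_abs, sq_abs]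


lemma aux_indep_shrink {Ω α β α' β' : Type*} [MeasureSpace Ω] [MeasurableSpace α]
    [MeasurableSpace β] [MeasurableSpace α'] [MeasurableSpace β']
    {f : Ω → α} {g : Ω → β} {f' : Ω → α'} {g' : Ω → β'}
    (hfg : IndepFun f g ℙ)
    (h1 : MeasurableSpace.comap f' inferInstance ≤ MeasurableSpace.comap f inferInstance)
    (h2 : MeasurableSpace.comap g' inferInstance ≤ MeasurableSpace.comap g inferInstance) :
    IndepFun f' g' ℙ :=
  indep_of_indep_of_le_right (indep_of_indep_of_le_left hfg h1) h2

lemma euclid_inner_eq {d : ℕ} (x y : EuclideanSpace ℝ (Fin d)) :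
    ⟪x, y⟫ = ∑ i, x i * y i := by
  simp [PiLp.inner_apply, RCLike.inner_apply, conj_trivial]
  exact Finset.sum_congr rfl fun _ _ => mul_comm _ _
end auxMisc

section auxStep
variable {m : ℕ} {V : EuclideanSpace ℝ (Fin m) → ℝ}
  {V' : EuclideanSpace ℝ (Fin m) → EuclideanSpace ℝ (Fin m)}

variable {m : ℕ} {V : EuclideanSpace ℝ (Fin m) → ℝ}
  {V' : EuclideanSpace ℝ (Fin m) → EuclideanSpace ℝ (Fin m)}

lemma ftc_key (hV' : ∀ x, HasGradientAt V (V' x) x) (hV'cont : Continuous V')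
    (Q v : EuclideanSpace ℝ (Fin m)) :
    V (Q + v) - V Q = ⟪(∫ s in (0:ℝ)..1, V' (Q + s • v)), v⟫ := by
  have hcont : Continuous fun s : ℝ => V' (Q + s • v) :=
    hV'cont.comp (by continuity)
  have hcomp : ∀ s : ℝ, HasDerivAt (fun t : ℝ => V (Q + t • v))
      (⟪V' (Q + s • v), v⟫) s := by
    intro s
    have hline : HasDerivAt (fun t : ℝ => Q + t • v) v s := by
      simpa using ((hasDerivAt_id s).smul_const v).const_add Q
    have := ((hV' (Q + s • v)).hasFDerivAt).comp_hasDerivAt s hline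
    simpa [InnerProductSpace.toDual_apply_apply, Function.comp_def] using this
  have hFTC : ∫ s in (0:ℝ)..1, ⟪V' (Q + s • v), v⟫
      = V (Q + (1:ℝ) • v) - V (Q + (0:ℝ) • v) :=
    intervalIntegral.integral_eq_sub_of_hasDerivAt (fun s _ => hcomp s)
      ((hcont.inner continuous_const).intervalIntegrable 0 1)
  have hswap : ∫ s in (0:ℝ)..1, ⟪V' (Q + s • v), v⟫
      = ⟪(∫ s in (0:ℝ)..1, V' (Q + s • v)), v⟫ := by
    have h1 := (innerSL ℝ v).intervalIntegral_comp_comm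
      (hcont.intervalIntegrable (μ := MeasureTheory.volume) 0 1)
    simp only [innerSL_apply_apply] at h1
    calc ∫ s in (0:ℝ)..1, ⟪V' (Q + s • v), v⟫
        = ∫ s in (0:ℝ)..1, ⟪v, V' (Q + s • v)⟫ := by
          simp_rw [real_inner_comm]
      _ = ⟪v, ∫ s in (0:ℝ)..1, V' (Q + s • v)⟫ := h1
      _ = _ := real_inner_comm _ _
  rw [← hswap, hFTC]
  norm_num

lemma step_pointwise (hV' : ∀ x, HasGradientAt V (V' x) x) (hV'cont : Continuous V')
    {h : ℝ} (a w Q ψ : EuclideanSpace ℝ (Fin m))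
    (hψ : ψ = a + w - (h/2) • (∫ s in (0:ℝ)..1, V' (Q + (s*h) • ψ))) :
    Ham V (a + w - h • ∫ s in (0:ℝ)..1, V' (Q + (s*h) • ψ)) (Q + h • ψ)
      = Ham V a Q + ⟪a, w⟫ + (1/2) * ‖w‖^2 := by
  have hIeq : (∫ s in (0:ℝ)..1, V' (Q + (s*h) • ψ))
      = ∫ s in (0:ℝ)..1, V' (Q + s • (h • ψ)) := by
    refine intervalIntegral.integral_congr fun s _ => ?_
    rw [smul_smul]
  set I := ∫ s in (0:ℝ)..1, V' (Q + (s*h) • ψ) with hIdef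
  have hd : V (Q + h • ψ) = V Q + ⟪I, h • ψ⟫ := by
    have := ftc_key hV' hV'cont Q (h • ψ)
    rw [← hIeq] at this
    linarith
  simp only [Ham, hd]
  rw [hψ]
  simp only [inner_add_right, inner_sub_right, real_inner_smul_right, inner_add_left,
    inner_sub_left, real_inner_smul_left]
  have e1 : ‖a + w - h • I‖^2 = ‖a‖^2 + ‖w‖^2 + h^2*‖I‖^2
      + 2*⟪a,w⟫ - 2*h*⟪a,I⟫ - 2*h*⟪w,I⟫ := by
    have e0 : ‖h • I‖^2 = h^2 * ‖I‖^2 := by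
      rw [norm_smul]
      simp [Real.norm_eq_abs, mul_pow, sq_abs]
    rw [norm_sub_sq_real, norm_add_sq_real, e0, inner_add_left, real_inner_smul_right,
      real_inner_smul_right]
    ring
  rw [e1]
  simp only [real_inner_self_eq_norm_sq]
  have c1 : ⟪I, a⟫ = ⟪a, I⟫ := real_inner_comm _ _
  have c2 : ⟪I, w⟫ = ⟪w, I⟫ := real_inner_comm _ _
  rw [c1, c2]
  ring

end auxStep

/-- Discrete trace formula (drift preservation) for the drift-preserving scheme:
`E[H(pₙ,qₙ)] = E[H(p₀,q₀)] + ½ Tr(ΣᵀΣ) n h`. -/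
theorem stmt2 {m d : ℕ} {Ω : Type*} [MeasureSpace Ω]
    [IsProbabilityMeasure (ℙ : Measure Ω)]
    (V : EuclideanSpace ℝ (Fin m) → ℝ)
    (V' : EuclideanSpace ℝ (Fin m) → EuclideanSpace ℝ (Fin m))
    (hV' : ∀ x, HasGradientAt V (V' x) x) (hV'cont : Continuous V')
    (h : ℝ) (hh : 0 < h) (S : Matrix (Fin m) (Fin d) ℝ)
    (p q : ℕ → Ω → EuclideanSpace ℝ (Fin m))
    (Ψ : ℕ → Ω → EuclideanSpace ℝ (Fin m))
    (ΔW : ℕ → Ω → EuclideanSpace ℝ (Fin d))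
    (hmeasΔW : ∀ n, Measurable (ΔW n))
    (hmeasp : ∀ n, Measurable (p n)) (hmeasq : ∀ n, Measurable (q n))
    -- each component of `ΔWₙ` is a centred real Gaussian with variance `h`
    (hGaussLaw : ∀ n, ∀ j : Fin d,
      Measure.map (fun ω => ΔW n ω j) ℙ = gaussianReal 0 (Real.toNNReal h))
    -- the `d` components of `ΔWₙ` are independent
    (hGaussIndep : ∀ n,
      iIndepFun
        (fun j ω => ΔW n ω j) ℙ)
    -- the scheme relations hold almost surely
    (hΨ : ∀ n : ℕ, ∀ᵐ ω ∂ℙ, Ψ (n + 1) ω = p n ω + matVec S (ΔW n ω)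
        - (h / 2) • ∫ s in (0:ℝ)..1, V' (q n ω + (s * h) • Ψ (n + 1) ω))
    (hq : ∀ n : ℕ, ∀ᵐ ω ∂ℙ, q (n + 1) ω = q n ω + h • Ψ (n + 1) ω)
    (hp : ∀ n : ℕ, ∀ᵐ ω ∂ℙ, p (n + 1) ω = p n ω + matVec S (ΔW n ω)
        - h • ∫ s in (0:ℝ)..1, V' (q n ω + (s * h) • Ψ (n + 1) ω))
    -- `ΔWₙ` is independent of `((p₀,q₀), ΔW₀, …, ΔW_{n-1})`
    (hindep : ∀ n : ℕ, IndepFun (ΔW n)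
      (fun ω => ((p 0 ω, q 0 ω), fun k : Fin n => ΔW k ω)) ℙ)
    -- `(pₙ,qₙ)` is measurable w.r.t. `σ((p₀,q₀), ΔW₀, …, ΔW_{n-1})`
    (hadapted : ∀ n : ℕ,
      Measurable[MeasurableSpace.comap
        (fun ω => ((p 0 ω, q 0 ω), fun k : Fin n => ΔW k ω)) inferInstance]
        (fun ω => (p n ω, q n ω)))
    -- `pₙ` is square integrable
    (hpL2 : ∀ n, MemLp (p n) 2 ℙ)
    -- `H(p₀,q₀)` is integrable
    (hH0 : Integrable (fun ω => Ham V (p 0 ω) (q 0 ω)) ℙ) :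
    ∀ n : ℕ, ∫ ω, Ham V (p n ω) (q n ω) ∂ℙ
      = (∫ ω, Ham V (p 0 ω) (q 0 ω) ∂ℙ)
        + (1 / 2) * (∑ i, ∑ j, (S i j) ^ 2) * (n * h) := by
    classical
  set T : ℝ := ∑ i, ∑ j, (S i j)^2 with hT
  have hn0 : Real.toNNReal h ≠ 0 := (Real.toNNReal_pos.mpr hh).ne'
  have hWmeas : ∀ n (j : Fin d), Measurable (fun ω => ΔW n ω j) := fun n j =>
    (EuclideanSpace.proj (𝕜 := ℝ) j).continuous.measurable.comp (hmeasΔW n)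
  have hpcmeas : ∀ n (i : Fin m), Measurable (fun ω => p n ω i) := fun n i =>
    (EuclideanSpace.proj (𝕜 := ℝ) i).continuous.measurable.comp (hmeasp n)
  have hWsqInt : ∀ n (j : Fin d), Integrable (fun ω => (ΔW n ω j)^2) ℙ := by
    intro n j
    have h1 := gaussianReal_integrable_sq hn0
    rw [← hGaussLaw n j] at h1
    exact (integrable_map_measure
      (measurable_id.pow_const 2).aestronglyMeasurable (hWmeas n j).aemeasurable).mp h1
  have hWL2 : ∀ n (j : Fin d), MemLp (fun ω => ΔW n ω j) 2 ℙ := fun n j =>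
    (memLp_two_iff_integrable_sq (hWmeas n j).aestronglyMeasurable).mpr (hWsqInt n j)
  have hWmean : ∀ n (j : Fin d), ∫ ω, ΔW n ω j ∂ℙ = 0 := by
    intro n j
    have h2 := integral_map (μ := ℙ) (φ := fun ω => ΔW n ω j) (f := fun x : ℝ => x)
      (hWmeas n j).aemeasurable measurable_id.aestronglyMeasurable
    rw [hGaussLaw n j, gaussianReal_mean_zero hn0] at h2
    exact h2.symm
  have hWsqval : ∀ n (j : Fin d), ∫ ω, (ΔW n ω j)^2 ∂ℙ = h := by
    intro n j
    have h2 := integral_map (μ := ℙ) (φ := fun ω => ΔW n ω j) (f := fun x : ℝ => x^2)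
      (hWmeas n j).aemeasurable (measurable_id.pow_const 2).aestronglyMeasurable
    rw [hGaussLaw n j, gaussianReal_sq_moment hn0] at h2
    rw [← h2, Real.coe_toNNReal _ hh.le]
  have hpcL2 : ∀ n (i : Fin m), MemLp (fun ω => p n ω i) 2 ℙ := by
    intro n i
    refine MemLp.of_le (hpL2 n) (hpcmeas n i).aestronglyMeasurable
      (Filter.Eventually.of_forall fun ω => ?_)
    rw [Real.norm_eq_abs]
    exact coord_abs_le_norm (p n ω) i
  have hindep2 : ∀ n (i : Fin m) (j : Fin d),
      IndepFun (fun ω => p n ω i) (fun ω => ΔW n ω j) ℙ := by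
    intro n i j
    have hD : MeasurableSpace.comap (fun ω => ΔW n ω j) inferInstance
        ≤ MeasurableSpace.comap (ΔW n) inferInstance :=
      Measurable.comap_le ((EuclideanSpace.proj (𝕜 := ℝ) j).continuous.measurable.comp
        (measurable_iff_comap_le.mpr le_rfl))
    have hP : MeasurableSpace.comap (fun ω => p n ω i) inferInstance
        ≤ MeasurableSpace.comap
          (fun ω => ((p 0 ω, q 0 ω), fun k : Fin n => ΔW k ω)) inferInstance :=
      Measurable.comap_le (((EuclideanSpace.proj (𝕜 := ℝ) i).continuous.measurable.comp
        measurable_fst).comp (hadapted n))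
    exact (aux_indep_shrink (hindep n) hD hP).symm
  have hprod_int : ∀ n (i : Fin m) (j : Fin d),
      Integrable (fun ω => p n ω i * ΔW n ω j) ℙ := fun n i j =>
    mulL2 (hpcL2 n i) (hWL2 n j)
  have hprod_zero : ∀ n (i : Fin m) (j : Fin d),
      ∫ ω, p n ω i * ΔW n ω j ∂ℙ = 0 := by
    intro n i j
    have hmul := IndepFun.integral_mul_eq_mul_integral (hindep2 n i j)
      (hpcmeas n i).aestronglyMeasurable (hWmeas n j).aestronglyMeasurable
    calc ∫ ω, p n ω i * ΔW n ω j ∂ℙ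
        = (∫ ω, p n ω i ∂ℙ) * ∫ ω, ΔW n ω j ∂ℙ := hmul
      _ = 0 := by rw [hWmean n j, mul_zero]
  have hWprod_int : ∀ n (j k : Fin d),
      Integrable (fun ω => ΔW n ω j * ΔW n ω k) ℙ := fun n j k =>
    mulL2 (hWL2 n j) (hWL2 n k)
  have hWprod : ∀ n (j k : Fin d),
      ∫ ω, ΔW n ω j * ΔW n ω k ∂ℙ = if j = k then h else 0 := by
    intro n j k
    by_cases hjk : j = k
    · subst hjk
      rw [if_pos rfl]
      simp_rw [← pow_two]
      exact hWsqval n j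
    · rw [if_neg hjk]
      have hmul := IndepFun.integral_mul_eq_mul_integral ((hGaussIndep n).indepFun hjk)
        (hWmeas n j).aestronglyMeasurable (hWmeas n k).aestronglyMeasurable
      calc ∫ ω, ΔW n ω j * ΔW n ω k ∂ℙ
          = (∫ ω, ΔW n ω j ∂ℙ) * ∫ ω, ΔW n ω k ∂ℙ := hmul
        _ = 0 := by rw [hWmean n j, hWmean n k, mul_zero]
  have hinner_eq : ∀ n (ω : Ω), ⟪p n ω, matVec S (ΔW n ω)⟫
      = ∑ i, ∑ j, S i j * (p n ω i * ΔW n ω j) := by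
    intro n ω
    rw [euclid_inner_eq]
    refine Finset.sum_congr rfl fun i _ => ?_
    have hmv : matVec S (ΔW n ω) i = ∑ j, S i j * ΔW n ω j := rfl
    rw [hmv, Finset.mul_sum]
    exact Finset.sum_congr rfl fun j _ => by ring
  have hinner_int : ∀ n, Integrable (fun ω => ⟪p n ω, matVec S (ΔW n ω)⟫) ℙ := by
    intro n
    have hsum : Integrable (fun ω => ∑ i, ∑ j, S i j * (p n ω i * ΔW n ω j)) ℙ :=
      integrable_finset_sum _ fun i _ => integrable_finset_sum _ fun j _ =>
        (hprod_int n i j).const_mul _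
    exact hsum.congr (Filter.Eventually.of_forall fun ω => (hinner_eq n ω).symm)
  have hinner_zero : ∀ n, ∫ ω, ⟪p n ω, matVec S (ΔW n ω)⟫ ∂ℙ = 0 := by
    intro n
    rw [integral_congr_ae (Filter.Eventually.of_forall (hinner_eq n))]
    refine (integral_finset_sum _ (fun i _ => integrable_finset_sum _ fun j _ =>
        (hprod_int n i j).const_mul _)).trans ?_
    refine Finset.sum_eq_zero fun i _ => ?_
    refine (integral_finset_sum _ (fun j _ => (hprod_int n i j).const_mul _)).trans ?_
    refine Finset.sum_eq_zero fun j _ => ?_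
    rw [MeasureTheory.integral_const_mul, hprod_zero n i j, mul_zero]
  have hnorm_eq : ∀ n (ω : Ω), ‖matVec S (ΔW n ω)‖^2
      = ∑ i, ∑ j, ∑ k, (S i j * S i k) * (ΔW n ω j * ΔW n ω k) := by
    intro n ω
    rw [norm_sq_eq_sum]
    refine Finset.sum_congr rfl fun i _ => ?_
    have hmv : matVec S (ΔW n ω) i = ∑ j, S i j * ΔW n ω j := rfl
    rw [hmv, pow_two, Finset.sum_mul_sum]
    refine Finset.sum_congr rfl fun j _ => ?_
    exact Finset.sum_congr rfl fun k _ => by ring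
  have hnorm_int : ∀ n, Integrable (fun ω => ‖matVec S (ΔW n ω)‖^2) ℙ := by
    intro n
    have hsum : Integrable
        (fun ω => ∑ i, ∑ j, ∑ k, (S i j * S i k) * (ΔW n ω j * ΔW n ω k)) ℙ :=
      integrable_finset_sum _ fun i _ => integrable_finset_sum _ fun j _ =>
        integrable_finset_sum _ fun k _ => (hWprod_int n j k).const_mul _
    exact hsum.congr (Filter.Eventually.of_forall fun ω => (hnorm_eq n ω).symm)
  have hnorm_val : ∀ n, ∫ ω, ‖matVec S (ΔW n ω)‖^2 ∂ℙ = h * T := by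
    intro n
    rw [integral_congr_ae (Filter.Eventually.of_forall (hnorm_eq n))]
    refine (integral_finset_sum _ (fun i _ => integrable_finset_sum _ fun j _ =>
        integrable_finset_sum _ fun k _ => (hWprod_int n j k).const_mul _)).trans ?_
    have hsum : ∀ i : Fin m,
        (∫ ω, ∑ j, ∑ k, (S i j * S i k) * (ΔW n ω j * ΔW n ω k) ∂ℙ)
          = ∑ j, (S i j)^2 * h := by
      intro i
      refine (integral_finset_sum _ (fun j _ => integrable_finset_sum _ fun k _ =>
        (hWprod_int n j k).const_mul _)).trans ?_
      refine Finset.sum_congr rfl fun j _ => ?_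
      refine (integral_finset_sum _ (fun k _ => (hWprod_int n j k).const_mul _)).trans ?_
      have hterm : ∀ k : Fin d, ∫ ω, (S i j * S i k) * (ΔW n ω j * ΔW n ω k) ∂ℙ
          = (S i j * S i k) * (if j = k then h else 0) := fun k => by
        rw [MeasureTheory.integral_const_mul, hWprod n j k]
      rw [Finset.sum_congr rfl fun k _ => hterm k, Finset.sum_eq_single j]
      · rw [if_pos rfl]; ring
      · intro b _ hb; rw [if_neg (Ne.symm hb), mul_zero]
      · intro hj; exact absurd (Finset.mem_univ j) hj
    rw [Finset.sum_congr rfl fun i _ => hsum i]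
    have hTh : h * T = ∑ i, ∑ j, (S i j)^2 * h := by
      rw [hT, Finset.mul_sum]
      refine Finset.sum_congr rfl fun i _ => ?_
      rw [Finset.mul_sum]
      exact Finset.sum_congr rfl fun j _ => by ring
    rw [hTh]
  have hstep : ∀ n, (fun ω => Ham V (p (n+1) ω) (q (n+1) ω)) =ᵐ[ℙ]
      (fun ω => Ham V (p n ω) (q n ω) + ⟪p n ω, matVec S (ΔW n ω)⟫
        + (1/2) * ‖matVec S (ΔW n ω)‖^2) := by
    intro n
    filter_upwards [hΨ n, hq n, hp n] with ω h1 h2 h3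
    rw [h3, h2]
    exact step_pointwise hV' hV'cont _ _ _ _ h1
  have main : ∀ n : ℕ, Integrable (fun ω => Ham V (p n ω) (q n ω)) ℙ ∧
      ∫ ω, Ham V (p n ω) (q n ω) ∂ℙ
        = (∫ ω, Ham V (p 0 ω) (q 0 ω) ∂ℙ) + (1/2) * T * (n*h) := by
    intro n
    induction n with
    | zero => exact ⟨hH0, by simp⟩
    | succ n ih =>
      obtain ⟨ihInt, ihVal⟩ := ih
      have hRHSint : Integrable (fun ω => Ham V (p n ω) (q n ω)
          + ⟪p n ω, matVec S (ΔW n ω)⟫ + (1/2) * ‖matVec S (ΔW n ω)‖^2) ℙ :=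
        (ihInt.add (hinner_int n)).add ((hnorm_int n).const_mul _)
      refine ⟨hRHSint.congr (hstep n).symm, ?_⟩
      have hf1 : Integrable (fun ω => Ham V (p n ω) (q n ω)
          + ⟪p n ω, matVec S (ΔW n ω)⟫) ℙ := ihInt.add (hinner_int n)
      rw [integral_congr_ae (hstep n),
        integral_add hf1 ((hnorm_int n).const_mul _),
        integral_add ihInt (hinner_int n), MeasureTheory.integral_const_mul, hinner_zero n,
        hnorm_val n, ihVal]
      push_cast
      ring
  intro n
  exact (main n).2
end

section
/- Solvability of the drift-preserving scheme: let V : ℝ^m → ℝ be continuously differentiable with V' globally Lipschitz continuous with constant L > 0. Then for every step size h with 0 < h < 2/√L (equivalently h² L < 4), and for all p, q ∈ ℝ^m and w ∈ ℝ^m, there exists a unique Ψ ∈ ℝ^m satisfying the implicit equation Ψ = p + w − (h/2)∫₀¹ V'(q + s h Ψ) ds. -/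
open MeasureTheory intervalIntegral

/-- Solvability of the drift-preserving scheme: if `V'` is globally Lipschitz
with constant `L > 0` and `0 < h < 2/√L`, then for all `p, q, w` there is a
unique `Ψ` solving the implicit equation
`Ψ = p + w − (h/2) ∫₀¹ V'(q + s h Ψ) ds`. -/
theorem stmt4 {m : ℕ} (V : EuclideanSpace ℝ (Fin m) → ℝ)
    (V' : EuclideanSpace ℝ (Fin m) → EuclideanSpace ℝ (Fin m))
    (hV' : ∀ x, HasGradientAt V (V' x) x) (hV'cont : Continuous V')
    (L : ℝ) (hL : 0 < L) (hLip : ∀ x y, ‖V' x - V' y‖ ≤ L * ‖x - y‖)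
    (h : ℝ) (hh : 0 < h) (hhs : h < 2 / Real.sqrt L) :
    ∀ p q w : EuclideanSpace ℝ (Fin m),
      ∃! Ψ : EuclideanSpace ℝ (Fin m),
        Ψ = p + w - (h / 2) • ∫ s in (0:ℝ)..1, V' (q + (s * h) • Ψ) := by
  intro p q w
  set K : NNReal := ⟨h^2 * L / 4, by positivity⟩ with hKdef
  have hsL : (0:ℝ) < Real.sqrt L := Real.sqrt_pos.mpr hL
  have hhsL : h * Real.sqrt L < 2 := by
    rw [lt_div_iff₀ hsL] at hhs; exact hhs
  have hK1r : h^2 * L / 4 < 1 := by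
    have h2 : (h * Real.sqrt L)^2 < 4 := by nlinarith [mul_nonneg hh.le hsL.le]
    rw [mul_pow, Real.sq_sqrt hL.le] at h2
    linarith
  have hK1 : K < 1 := by
    rw [← NNReal.coe_lt_coe]; exact hK1r
  set T : EuclideanSpace ℝ (Fin m) → EuclideanSpace ℝ (Fin m) :=
    fun Ψ => p + w - (h / 2) • ∫ s in (0:ℝ)..1, V' (q + (s * h) • Ψ) with hT
  have hint : ∀ Ψ : EuclideanSpace ℝ (Fin m),
      IntervalIntegrable (fun s : ℝ => V' (q + (s * h) • Ψ)) volume 0 1 := by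
    intro Ψ
    exact (hV'cont.comp (by continuity)).intervalIntegrable _ _
  have hTlip : LipschitzWith K T := by
    apply LipschitzWith.of_dist_le_mul
    intro Ψ Φ
    rw [dist_eq_norm, dist_eq_norm]
    have hsub : T Ψ - T Φ
        = (h / 2) • ∫ s in (0:ℝ)..1,
            (V' (q + (s * h) • Φ) - V' (q + (s * h) • Ψ)) := by
      rw [intervalIntegral.integral_sub (hint Φ) (hint Ψ), smul_sub, hT]
      exact sub_sub_sub_cancel_left _ _ _
    rw [hsub, norm_smul]
    have hbound : ‖∫ s in (0:ℝ)..1,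
        (V' (q + (s * h) • Φ) - V' (q + (s * h) • Ψ))‖
        ≤ ∫ s in (0:ℝ)..1, s * (L * h * ‖Ψ - Φ‖) := by
      calc ‖∫ s in (0:ℝ)..1,
          (V' (q + (s * h) • Φ) - V' (q + (s * h) • Ψ))‖
          ≤ ∫ s in (0:ℝ)..1, ‖V' (q + (s * h) • Φ) - V' (q + (s * h) • Ψ)‖ :=
            intervalIntegral.norm_integral_le_integral_norm zero_le_one
        _ ≤ ∫ s in (0:ℝ)..1, s * (L * h * ‖Ψ - Φ‖) := ?_
      apply intervalIntegral.integral_mono_on zero_le_one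
        ((hint Φ).sub (hint Ψ)).norm
        ((continuous_id.mul continuous_const).intervalIntegrable 0 1)
      intro s hs
      rw [Set.mem_Icc] at hs
      have hs01 : 0 ≤ s ∧ s ≤ 1 := hs
      calc ‖V' (q + (s * h) • Φ) - V' (q + (s * h) • Ψ)‖
            ≤ L * ‖(q + (s * h) • Φ) - (q + (s * h) • Ψ)‖ := hLip _ _
          _ = L * (|s| * (|h| * ‖Φ - Ψ‖)) := by
              rw [add_sub_add_left_eq_sub, ← smul_sub, norm_smul,
                Real.norm_eq_abs, abs_mul]
              ring
          _ = s * (L * h * ‖Ψ - Φ‖) := by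
              rw [abs_of_nonneg hs01.1, abs_of_nonneg hh.le, norm_sub_rev]
              ring
    have hval : (∫ s in (0:ℝ)..1, s * (L * h * ‖Ψ - Φ‖))
        = (L * h * ‖Ψ - Φ‖) / 2 := by
      rw [intervalIntegral.integral_mul_const, integral_id]
      ring
    rw [hval] at hbound
    calc ‖(h/2 : ℝ)‖ * ‖∫ s in (0:ℝ)..1,
          (V' (q + (s * h) • Φ) - V' (q + (s * h) • Ψ))‖
        ≤ (h/2) * ((L * h * ‖Ψ - Φ‖) / 2) := by
          apply mul_le_mul_of_nonneg_left hbound (by positivity) |>.trans_eq'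
          rw [Real.norm_eq_abs, abs_of_nonneg (by positivity)]
      _ = (K : ℝ) * ‖Ψ - Φ‖ := by
          show _ = (h^2 * L / 4) * ‖Ψ - Φ‖; ring
  have hC : ContractingWith K T := ⟨hK1, hTlip⟩
  refine ⟨hC.fixedPoint, (hC.fixedPoint_isFixedPt).symm, ?_⟩
  intro y hy
  exact hC.fixedPoint_unique hy.symm
end

section
/- A priori L² bound for one step of the drift-preserving scheme: let V : ℝ^m → ℝ be continuously differentiable with V' of linear growth, i.e., |V'(x)| ≤ K(1 + |x|) for all x ∈ ℝ^m and some K > 0, and let Σ ∈ ℝ^{m×d}. Then there exist h* > 0 and C > 0, depending only on K, m, d and Σ, such that for all 0 < h ≤ h*, for all square-integrable random vectors p, q in ℝ^m and every ℝ^d-valued random vector W whose components are independent real Gaussian random variables with mean 0 and variance h, any random vector ψ̄ satisfying ψ̄ = p + ΣW − (h/2)∫₀¹ V'(q + s h ψ̄) ds almost surely, together with q̄ = q + hψ̄ and p̄ = p + ΣW − h∫₀¹ V'(q + s h ψ̄) ds, obeys E[|ψ̄|²] + E[|q̄|²] + E[|p̄|²] ≤ C(1 + E[|q|²] + E[|p|²]).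 -/
open MeasureTheory ProbabilityTheory intervalIntegral
open scoped BigOperators

section aux

lemma gauss_int_sq_std : Integrable (fun x : ℝ => x ^ 2) (gaussianReal 0 1) := by
  rw [gaussianReal_of_var_ne_zero 0 one_ne_zero]
  rw [integrable_withDensity_iff (measurable_gaussianPDF 0 1)
    (Filter.Eventually.of_forall fun x => ENNReal.ofReal_lt_top)]
  have hbase : Integrable (fun x : ℝ => x ^ 2 * Real.exp (-(1/2 : ℝ) * x ^ 2)) := by
    have h := integrable_rpow_mul_exp_neg_mul_sq (b := (1/2 : ℝ)) (by norm_num)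
      (s := (2:ℝ)) (by norm_num)
    refine h.congr (Filter.Eventually.of_forall fun x => ?_)
    norm_num
  have h2 := hbase.const_mul ((Real.sqrt (2 * Real.pi * (1:ℝ)))⁻¹)
  refine h2.congr (Filter.Eventually.of_forall fun x => ?_)
  simp only [gaussianPDF]
  rw [ENNReal.toReal_ofReal (gaussianPDFReal_nonneg 0 1 x)]
  simp only [gaussianPDFReal]
  push_cast
  ring_nf

lemma gauss_map (h : ℝ) (hh : 0 < h) :
    gaussianReal 0 (Real.toNNReal h) =
      Measure.map (fun x => Real.sqrt h * x) (gaussianReal 0 1) := by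
  rw [gaussianReal_map_const_mul (Real.sqrt h)]
  congr 1
  · simp
  · ext
    simp [Real.sq_sqrt hh.le, Real.coe_toNNReal _ hh.le]

noncomputable def gA : ℝ := ∫ x, x ^ 2 ∂(gaussianReal 0 1)

lemma gA_nonneg : 0 ≤ gA := integral_nonneg fun x => sq_nonneg x

lemma gauss_int_sq (h : ℝ) (hh : 0 < h) :
    Integrable (fun x : ℝ => x ^ 2) (gaussianReal 0 (Real.toNNReal h)) := by
  rw [gauss_map h hh]
  rw [integrable_map_measure (by fun_prop) (by fun_prop)]
  have := (gauss_int_sq_std.const_mul h)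
  refine this.congr (Filter.Eventually.of_forall fun x => ?_)
  simp [Function.comp, mul_pow, Real.sq_sqrt hh.le]

lemma gauss_moment (h : ℝ) (hh : 0 < h) :
    ∫ x, x ^ 2 ∂(gaussianReal 0 (Real.toNNReal h)) = h * gA := by
  rw [gauss_map h hh, integral_map (by fun_prop) (by fun_prop)]
  rw [gA, ← MeasureTheory.integral_const_mul]
  congr 1; funext x
  rw [mul_pow, Real.sq_sqrt hh.le]

noncomputable def matVecCLM {m d : ℕ} (S : Matrix (Fin m) (Fin d) ℝ) :
    EuclideanSpace ℝ (Fin d) →L[ℝ] EuclideanSpace ℝ (Fin m) :=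
  LinearMap.toContinuousLinearMap
  { toFun := matVec S
    map_add' := by
      intro x y; ext i
      simp [matVec, mul_add, Finset.sum_add_distrib]
    map_smul' := by
      intro c x; ext i
      simp only [matVec, PiLp.toLp_apply, RingHom.id_apply, PiLp.smul_apply, smul_eq_mul, Finset.mul_sum]
      exact Finset.sum_congr rfl fun j _ => by ring }

lemma matVecCLM_apply {m d : ℕ} (S : Matrix (Fin m) (Fin d) ℝ)
    (w : EuclideanSpace ℝ (Fin d)) : matVecCLM S w = matVec S w := rfl

lemma matVec_norm_le {m d : ℕ} (S : Matrix (Fin m) (Fin d) ℝ)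
    (w : EuclideanSpace ℝ (Fin d)) :
    ‖matVec S w‖ ≤ ‖matVecCLM S‖ * ‖w‖ := by
  have := (matVecCLM S).le_opNorm w
  simpa [matVecCLM_apply] using this

variable {d : ℕ} {Ω : Type} [MeasureSpace Ω] [IsProbabilityMeasure (ℙ : Measure Ω)]

omit [IsProbabilityMeasure (ℙ : Measure Ω)] in
lemma W_comp_sq (h : ℝ) (hh : 0 < h) (W : Ω → EuclideanSpace ℝ (Fin d)) (hW : Measurable W)
    (hlaw : ∀ j : Fin d, Measure.map (fun ω => W ω j) ℙ = gaussianReal 0 (Real.toNNReal h))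
    (j : Fin d) :
    Integrable (fun ω => (W ω j) ^ 2) ℙ ∧ ∫ ω, (W ω j) ^ 2 ∂ℙ = h * gA := by
  have hWj : Measurable (fun ω => W ω j) := (measurable_pi_apply j).comp ((WithLp.measurable_ofLp 2 _).comp hW)
  have key : Integrable (fun x : ℝ => x ^ 2) (Measure.map (fun ω => W ω j) ℙ) := by
    rw [hlaw j]; exact gauss_int_sq h hh
  constructor
  · exact (integrable_map_measure (by fun_prop) hWj.aemeasurable).mp key
  · rw [show (∫ ω, (W ω j) ^ 2 ∂ℙ) = ∫ x, x ^ 2 ∂(Measure.map (fun ω => W ω j) ℙ) from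
      (integral_map hWj.aemeasurable
        (measurable_id.pow_const 2).aestronglyMeasurable).symm, hlaw j, gauss_moment h hh]

omit [IsProbabilityMeasure (ℙ : Measure Ω)] in
lemma W_norm_sq (h : ℝ) (hh : 0 < h) (W : Ω → EuclideanSpace ℝ (Fin d)) (hW : Measurable W)
    (hlaw : ∀ j : Fin d, Measure.map (fun ω => W ω j) ℙ = gaussianReal 0 (Real.toNNReal h)) :
    Integrable (fun ω => ‖W ω‖ ^ 2) ℙ ∧ ∫ ω, ‖W ω‖ ^ 2 ∂ℙ = d * (h * gA) := by
  have hsum : ∀ ω, ‖W ω‖ ^ 2 = ∑ j, (W ω j) ^ 2 := by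
    intro ω
    rw [EuclideanSpace.norm_eq, Real.sq_sqrt (by positivity)]
    simp [sq_abs]
  constructor
  · refine (integrable_finset_sum Finset.univ fun j _ => (W_comp_sq h hh W hW hlaw j).1).congr
      (Filter.Eventually.of_forall fun ω => (hsum ω).symm)
  · calc ∫ ω, ‖W ω‖ ^ 2 ∂ℙ = ∫ ω, ∑ j, (W ω j) ^ 2 ∂ℙ :=
          integral_congr_ae (Filter.Eventually.of_forall hsum)
      _ = ∑ j : Fin d, ∫ ω, (W ω j) ^ 2 ∂ℙ :=
          integral_finset_sum _ fun j _ => (W_comp_sq h hh W hW hlaw j).1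
      _ = d * (h * gA) := by
          simp [(fun j => (W_comp_sq h hh W hW hlaw j).2), Finset.sum_const]

end aux

set_option maxHeartbeats 1000000 in
/-- A priori L² bound for one step of the drift-preserving scheme: if `V'` has
linear growth `|V'(x)| ≤ K(1 + |x|)`, there are `h* > 0` and `C > 0`, depending
only on `K`, `m`, `d` and `Σ`, such that for all `0 < h ≤ h*` the step
`(ψ̄, q̄, p̄)` from square-integrable data `(p, q)` with Gaussian increment `W`
satisfies `E[|ψ̄|²] + E[|q̄|²] + E[|p̄|²] ≤ C(1 + E[|q|²] + E[|p|²])`. -/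
theorem stmt14 {m d : ℕ} (K : ℝ) (hK : 0 < K) (S : Matrix (Fin m) (Fin d) ℝ) :
    ∃ hstar > (0:ℝ), ∃ C > (0:ℝ),
      ∀ (h : ℝ), 0 < h → h ≤ hstar →
      ∀ (V : EuclideanSpace ℝ (Fin m) → ℝ)
        (V' : EuclideanSpace ℝ (Fin m) → EuclideanSpace ℝ (Fin m)),
        (∀ x, HasGradientAt V (V' x) x) → Continuous V' →
        (∀ x, ‖V' x‖ ≤ K * (1 + ‖x‖)) →
      ∀ (Ω : Type) [MeasureSpace Ω] [IsProbabilityMeasure (ℙ : Measure Ω)]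
        (p q : Ω → EuclideanSpace ℝ (Fin m)),
        Measurable p → Measurable q → MemLp p 2 ℙ → MemLp q 2 ℙ →
      ∀ (W : Ω → EuclideanSpace ℝ (Fin d)), Measurable W →
        (∀ j : Fin d,
          Measure.map (fun ω => W ω j) ℙ = gaussianReal 0 (Real.toNNReal h)) →
        iIndepFun
          (fun j ω => W ω j) ℙ →
      ∀ (ψ : Ω → EuclideanSpace ℝ (Fin m)), Measurable ψ →
        (∀ᵐ ω ∂ℙ, ψ ω = p ω + matVec S (W ω)
          - (h / 2) • ∫ s in (0:ℝ)..1, V' (q ω + (s * h) • ψ ω)) →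
      (∫ ω, ‖ψ ω‖ ^ 2 ∂ℙ) + (∫ ω, ‖q ω + h • ψ ω‖ ^ 2 ∂ℙ)
          + (∫ ω, ‖p ω + matVec S (W ω)
              - h • ∫ s in (0:ℝ)..1, V' (q ω + (s * h) • ψ ω)‖ ^ 2 ∂ℙ)
        ≤ C * (1 + (∫ ω, ‖q ω‖ ^ 2 ∂ℙ) + ∫ ω, ‖p ω‖ ^ 2 ∂ℙ) := by
  set CL : ℝ := ‖matVecCLM S‖ with hCL
  have hCL0 : 0 ≤ CL := norm_nonneg _
  set B : ℝ := CL ^ 2 * d * gA with hB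
  have hB0 : 0 ≤ B := mul_nonneg (mul_nonneg (sq_nonneg _) (Nat.cast_nonneg _)) gA_nonneg
  refine ⟨min 1 (1/K), lt_min one_pos (by positivity), 224 * (1 + B), by nlinarith [hB0], ?_⟩
  intro h hh hhs V V' hgrad hV'c hgrow Ω _ _ p q hpm hqm hp2 hq2 W hWm hWlaw hWind ψ hψm hrel
  have hh1 : h ≤ 1 := hhs.trans (min_le_left _ _)
  have hhK : h * K ≤ 1 := by
    have := hhs.trans (min_le_right _ _)
    calc h * K ≤ (1/K) * K := by nlinarith
      _ = 1 := by field_simp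
  -- basic W facts
  have hWsq := W_norm_sq h hh W hWm hWlaw
  have hW2 : MemLp W 2 ℙ :=
    (memLp_two_iff_integrable_sq_norm hWm.aestronglyMeasurable).mpr hWsq.1
  have hSW2 : MemLp (fun ω => matVec S (W ω)) 2 ℙ := (matVecCLM S).comp_memLp' hW2
  -- the dominating function g
  set g : Ω → ℝ := fun ω => 1 + ‖q ω‖ + 2 * ‖p ω‖ + 2 * ‖matVec S (W ω)‖ with hgdef
  have hg0 : ∀ ω, 0 ≤ g ω := fun ω => by positivity
  have hgmem : MemLp g 2 ℙ :=
    (((memLp_const (1:ℝ)).add hq2.norm).add (hp2.norm.const_mul 2)).add (hSW2.norm.const_mul 2)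
  have hgsq : Integrable (fun ω => g ω ^ 2) ℙ :=
    (memLp_two_iff_integrable_sq hgmem.aestronglyMeasurable).mp hgmem
  -- pointwise a.e. bounds
  have hae : ∀ᵐ ω ∂ℙ, ‖ψ ω‖ ≤ g ω ∧
      (p ω + matVec S (W ω) - h • ∫ s in (0:ℝ)..1, V' (q ω + (s * h) • ψ ω))
        = (2:ℝ) • ψ ω - (p ω + matVec S (W ω)) := by
    filter_upwards [hrel] with ω hψω
    set I : EuclideanSpace ℝ (Fin m) := ∫ s in (0:ℝ)..1, V' (q ω + (s * h) • ψ ω) with hI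
    have hInorm : ‖I‖ ≤ K * (1 + ‖q ω‖ + h * ‖ψ ω‖) := by
      have hb : ∀ s ∈ Set.uIoc (0:ℝ) 1,
          ‖V' (q ω + (s * h) • ψ ω)‖ ≤ K * (1 + ‖q ω‖ + h * ‖ψ ω‖) := by
        intro s hs
        rw [Set.uIoc_of_le zero_le_one, Set.mem_Ioc] at hs
        refine (hgrow _).trans ?_
        have h1 : ‖q ω + (s * h) • ψ ω‖ ≤ ‖q ω‖ + (s * h) * ‖ψ ω‖ := by
          refine (norm_add_le _ _).trans ?_
          rw [norm_smul, Real.norm_eq_abs, abs_of_pos (mul_pos hs.1 hh)]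
        have h2 : (s * h) * ‖ψ ω‖ ≤ h * ‖ψ ω‖ := by
          nlinarith [mul_nonneg (mul_nonneg (sub_nonneg.mpr hs.2) hh.le) (norm_nonneg (ψ ω))]
        nlinarith [hK]
      have := intervalIntegral.norm_integral_le_of_norm_le_const hb
      simpa using this
    have hψn : ‖ψ ω‖ ≤ ‖p ω‖ + ‖matVec S (W ω)‖ + (h/2) * ‖I‖ := by
      rw [hψω]
      refine (norm_sub_le _ _).trans ?_
      have : ‖(h/2) • I‖ = (h/2) * ‖I‖ := by
        rw [norm_smul, Real.norm_eq_abs, abs_of_pos (by linarith)]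
      rw [this]
      gcongr
      exact norm_add_le _ _
    constructor
    · have hq0 := norm_nonneg (q ω); have hp0 := norm_nonneg (p ω)
      have hs0 := norm_nonneg (matVec S (W ω)); have hψ0 := norm_nonneg (ψ ω)
      simp only [hgdef]
      nlinarith [mul_nonneg (sub_nonneg.mpr hhK) (mul_nonneg hh.le hψ0),
        mul_nonneg (sub_nonneg.mpr hh1) hψ0,
        mul_nonneg (sub_nonneg.mpr hhK) (add_nonneg zero_le_one hq0),
        mul_nonneg hh.le (mul_nonneg hK.le hψ0)]
    · rw [hψω]
      module
  -- the three integrands, a.e. bounded by multiples of g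
  have sq_mono : ∀ {a b : ℝ}, 0 ≤ a → a ≤ b → a ^ 2 ≤ b ^ 2 := by
    intro a b ha hab; nlinarith
  have hb1 : ∀ᵐ ω ∂ℙ, ‖ψ ω‖ ^ 2 ≤ g ω ^ 2 := by
    filter_upwards [hae] with ω hω
    exact sq_mono (norm_nonneg _) hω.1
  have hb2 : ∀ᵐ ω ∂ℙ, ‖q ω + h • ψ ω‖ ^ 2 ≤ 4 * g ω ^ 2 := by
    filter_upwards [hae] with ω hω
    have h1 : ‖q ω + h • ψ ω‖ ≤ 2 * g ω := by
      refine (norm_add_le _ _).trans ?_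
      have : ‖h • ψ ω‖ = h * ‖ψ ω‖ := by
        rw [norm_smul, Real.norm_eq_abs, abs_of_pos hh]
      rw [this]
      have hq0 := norm_nonneg (q ω); have hp0 := norm_nonneg (p ω)
      have hs0 := norm_nonneg (matVec S (W ω)); have hψ0 := norm_nonneg (ψ ω)
      have := hω.1
      simp only [hgdef] at this ⊢
      nlinarith [mul_nonneg (sub_nonneg.mpr hh1) hψ0]
    nlinarith [norm_nonneg (q ω + h • ψ ω), hg0 ω]
  have hb3 : ∀ᵐ ω ∂ℙ, ‖(2:ℝ) • ψ ω - (p ω + matVec S (W ω))‖ ^ 2 ≤ 9 * g ω ^ 2 := by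
    filter_upwards [hae] with ω hω
    have h1 : ‖(2:ℝ) • ψ ω - (p ω + matVec S (W ω))‖ ≤ 3 * g ω := by
      refine (norm_sub_le _ _).trans ?_
      have h2 : ‖(2:ℝ) • ψ ω‖ = 2 * ‖ψ ω‖ := by
        rw [norm_smul, Real.norm_eq_abs]; norm_num
      rw [h2]
      have h3 := norm_add_le (p ω) (matVec S (W ω))
      have hq0 := norm_nonneg (q ω); have hp0 := norm_nonneg (p ω)
      have hs0 := norm_nonneg (matVec S (W ω))
      have := hω.1
      simp only [hgdef] at this ⊢
      nlinarith
    nlinarith [norm_nonneg ((2:ℝ) • ψ ω - (p ω + matVec S (W ω))), hg0 ω]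
  -- integrability of the three integrands
  have hSWmeas : Measurable (fun ω => matVec S (W ω)) := by
    have : Continuous (matVecCLM S) := (matVecCLM S).continuous
    exact this.measurable.comp hWm
  have int1 : Integrable (fun ω => ‖ψ ω‖ ^ 2) ℙ := by
    refine Integrable.mono' hgsq (hψm.norm.pow_const 2).aestronglyMeasurable ?_
    filter_upwards [hb1] with ω hω
    rw [Real.norm_eq_abs, abs_of_nonneg (by positivity)]
    exact hω
  have int2 : Integrable (fun ω => ‖q ω + h • ψ ω‖ ^ 2) ℙ := by
    refine Integrable.mono' (hgsq.const_mul 4) ?_ ?_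
    · exact ((hqm.add (hψm.const_smul h)).norm.pow_const 2).aestronglyMeasurable
    filter_upwards [hb2] with ω hω
    rw [Real.norm_eq_abs, abs_of_nonneg (by positivity)]
    exact hω
  have int3 : Integrable (fun ω => ‖(2:ℝ) • ψ ω - (p ω + matVec S (W ω))‖ ^ 2) ℙ := by
    refine Integrable.mono' (hgsq.const_mul 9) ?_ ?_
    · exact (((hψm.const_smul (2:ℝ)).sub (hpm.add hSWmeas)).norm.pow_const 2).aestronglyMeasurable
    filter_upwards [hb3] with ω hω
    rw [Real.norm_eq_abs, abs_of_nonneg (by positivity)]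
    exact hω
  -- rewrite the third integral
  have hrw3 : (∫ ω, ‖p ω + matVec S (W ω)
        - h • ∫ s in (0:ℝ)..1, V' (q ω + (s * h) • ψ ω)‖ ^ 2 ∂ℙ)
      = ∫ ω, ‖(2:ℝ) • ψ ω - (p ω + matVec S (W ω))‖ ^ 2 ∂ℙ := by
    refine integral_congr_ae ?_
    filter_upwards [hae] with ω hω
    rw [hω.2]
  -- bound integrals of g² by moments
  have hqsq : Integrable (fun ω => ‖q ω‖ ^ 2) ℙ :=
    (memLp_two_iff_integrable_sq_norm hq2.aestronglyMeasurable).mp hq2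
  have hpsq : Integrable (fun ω => ‖p ω‖ ^ 2) ℙ :=
    (memLp_two_iff_integrable_sq_norm hp2.aestronglyMeasurable).mp hp2
  have hSWsq : Integrable (fun ω => ‖matVec S (W ω)‖ ^ 2) ℙ :=
    (memLp_two_iff_integrable_sq_norm hSW2.aestronglyMeasurable).mp hSW2
  have hSWbound : ∫ ω, ‖matVec S (W ω)‖ ^ 2 ∂ℙ ≤ B := by
    have step1 : ∫ ω, ‖matVec S (W ω)‖ ^ 2 ∂ℙ ≤ ∫ ω, CL ^ 2 * ‖W ω‖ ^ 2 ∂ℙ := by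
      refine integral_mono_ae hSWsq (hWsq.1.const_mul _) ?_
      refine Filter.Eventually.of_forall fun ω => ?_
      have h1 := matVec_norm_le S (W ω)
      calc ‖matVec S (W ω)‖ ^ 2 ≤ (CL * ‖W ω‖) ^ 2 :=
            sq_mono (norm_nonneg _) (by rw [hCL]; exact h1)
        _ = CL ^ 2 * ‖W ω‖ ^ 2 := by ring
    rw [MeasureTheory.integral_const_mul, hWsq.2] at step1
    refine step1.trans ?_
    have : (d:ℝ) * (h * gA) ≤ (d:ℝ) * gA := by
      have hd : (0:ℝ) ≤ d := Nat.cast_nonneg d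
      nlinarith [mul_nonneg (mul_nonneg hd (sub_nonneg.mpr hh1)) gA_nonneg]
    calc CL ^ 2 * ((d:ℝ) * (h * gA)) ≤ CL ^ 2 * ((d:ℝ) * gA) := by nlinarith
      _ = B := by rw [hB]; ring
  set Eq2 : ℝ := ∫ ω, ‖q ω‖ ^ 2 ∂ℙ with hEq
  set Ep2 : ℝ := ∫ ω, ‖p ω‖ ^ 2 ∂ℙ with hEp
  have hEq0 : 0 ≤ Eq2 := integral_nonneg fun ω => by positivity
  have hEp0 : 0 ≤ Ep2 := integral_nonneg fun ω => by positivity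
  have hgbound : ∫ ω, g ω ^ 2 ∂ℙ ≤ 16 * (1 + Eq2 + Ep2 + B) := by
    have step : ∫ ω, g ω ^ 2 ∂ℙ
        ≤ ∫ ω, 16 * (1 + ‖q ω‖ ^ 2 + ‖p ω‖ ^ 2 + ‖matVec S (W ω)‖ ^ 2) ∂ℙ := by
      refine integral_mono_ae hgsq ?_ ?_
      · exact (((integrable_const (1:ℝ)).add hqsq).add hpsq |>.add hSWsq).const_mul 16
      refine Filter.Eventually.of_forall fun ω => ?_
      simp only [hgdef]
      nlinarith [norm_nonneg (q ω), norm_nonneg (p ω), norm_nonneg (matVec S (W ω)),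
        sq_nonneg (1 - ‖q ω‖), sq_nonneg (1 - 2*‖p ω‖), sq_nonneg (1 - 2*‖matVec S (W ω)‖),
        sq_nonneg (‖q ω‖ - 2*‖p ω‖), sq_nonneg (‖q ω‖ - 2*‖matVec S (W ω)‖),
        sq_nonneg (2*‖p ω‖ - 2*‖matVec S (W ω)‖)]
    rw [MeasureTheory.integral_const_mul] at step
    refine step.trans ?_
    have hmeas : (ℙ : Measure Ω) Set.univ = 1 := measure_univ
    have iB : Integrable (fun ω => 1 + ‖q ω‖ ^ 2) ℙ :=
      Integrable.congr ((integrable_const (1:ℝ)).add hqsq)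
        (Filter.Eventually.of_forall fun ω => rfl)
    have iA : Integrable (fun ω => 1 + ‖q ω‖ ^ 2 + ‖p ω‖ ^ 2) ℙ :=
      Integrable.congr (iB.add hpsq) (Filter.Eventually.of_forall fun ω => rfl)
    have : ∫ ω, (1 + ‖q ω‖ ^ 2 + ‖p ω‖ ^ 2 + ‖matVec S (W ω)‖ ^ 2) ∂ℙ
        = 1 + Eq2 + Ep2 + ∫ ω, ‖matVec S (W ω)‖ ^ 2 ∂ℙ := by
      rw [integral_add iA hSWsq, integral_add iB hpsq, integral_add (integrable_const (1:ℝ)) hqsq]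
      simp
      rfl
    rw [this]
    nlinarith [hSWbound]
  -- final assembly
  have e1 : ∫ ω, ‖ψ ω‖ ^ 2 ∂ℙ ≤ ∫ ω, g ω ^ 2 ∂ℙ := integral_mono_ae int1 hgsq hb1
  have e2 : ∫ ω, ‖q ω + h • ψ ω‖ ^ 2 ∂ℙ ≤ 4 * ∫ ω, g ω ^ 2 ∂ℙ := by
    have := integral_mono_ae int2 (hgsq.const_mul 4) hb2
    rwa [MeasureTheory.integral_const_mul] at this
  have e3 : ∫ ω, ‖(2:ℝ) • ψ ω - (p ω + matVec S (W ω))‖ ^ 2 ∂ℙ ≤ 9 * ∫ ω, g ω ^ 2 ∂ℙ := by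
    have := integral_mono_ae int3 (hgsq.const_mul 9) hb3
    rwa [MeasureTheory.integral_const_mul] at this
  rw [hrw3]
  have : (1:ℝ) + Eq2 + Ep2 + B ≤ (1 + B) * (1 + Eq2 + Ep2) := by nlinarith
  nlinarith [hgbound, e1, e2, e3]
end
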